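/- arXiv:2305.16794 — 2 statements merged into one kernel-verified Lean document; each statement's English description precedes it below -/
import Mathlib

section
/- Let U be a finite set of clients with |U| ≥ 2, let R ≥ 2 and m be natural numbers, and for each u ∈ U let h_u be a fixed element of the additive group (ZMod R)^m of m-tuples of integers modulo R. Fix a linear order on U and, for each pair u < v, let p_{u,v} be independent random variables each uniformly distributed on (ZMod R)^m; define pairwise masks n_{u,v} = p_{u,v} and n_{v,u} = −p_{u,v}, so that n_{u,v} = −n_{v,u} for all u ≠ v. Then the random tuple (h_u + ∑_{v ∈ U, v ≠ u} n_{u,v})_{u ∈ U} of masked values has exactly the same distribution as a tuple (w_u)_{u ∈ U} drawn uniformly from the set of all tuples in ((ZMod R)^m)^U whose coordinates sum to ∑_{u ∈ U} h_u. In other words, conditioned on the sum, the masked values are jointly uniformly random. -/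
/-!
The masked tuple is `h + M p`, where `M` sends the pairwise seeds `p` to the tuple of total
masks; `M` is additive, so the image of the uniform distribution is uniform on the coset
`h + range M`, every fibre being a coset of `ker M`. Antisymmetry makes every mask tuple sum to
zero, and conversely any tuple `g` with zero sum is a mask tuple: route all of it through one
client `r`, i.e. take `n (u, r) = g u` and `n (r, u) = -g u`. Hence `h + range M` is exactly the
set of tuples with the same sum as `h`.
-/

open Finset

namespace PMF

variable {α β : Type*} [Fintype α] [Nonempty α] [DecidableEq β]

theorem map_uniformOfFintype_apply (f : α → β) (b : β) :
    (uniformOfFintype α).map f b = #{a | f a = b} * (Fintype.card α : ENNReal)⁻¹ := by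
  simp only [map_apply, tsum_fintype, uniformOfFintype_apply, eq_comm (a := b)]
  rw [← sum_filter, sum_const, nsmul_eq_mul]

theorem map_uniformOfFintype_eq_uniformOfFinset {f : α → β} {s : Finset β} (hs : s.Nonempty)
    (hmaps : ∀ a, f a ∈ s) (hfiber : ∀ b ∈ s, ∀ b' ∈ s, #{a | f a = b} = #{a | f a = b'}) :
    (uniformOfFintype α).map f = uniformOfFinset s hs := by
  ext b
  rw [map_uniformOfFintype_apply]
  by_cases hb : b ∈ s
  · obtain ⟨a⟩ := ‹Nonempty α›
    have hfiber_pos : #{x | f x = b} ≠ 0 := by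
      rw [hfiber b hb (f a) (hmaps a)]
      exact (card_pos.mpr ⟨a, by simp⟩).ne'
    have hcard : Fintype.card α = #s * #{x | f x = b} := by
      rw [← card_univ, card_eq_sum_card_fiberwise (fun x _ => hmaps x),
        sum_congr rfl (fun b' hb' => hfiber b' hb' b hb), sum_const, smul_eq_mul]
    rw [uniformOfFinset_apply_of_mem (hs := hs) hb, hcard, Nat.cast_mul,
      ENNReal.mul_inv (by simp) (by simp), mul_left_comm,
      ENNReal.mul_inv_cancel (by exact_mod_cast hfiber_pos) (by simp), mul_one]
  · have hempty : #{x | f x = b} = 0 :=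
      card_eq_zero.mpr (filter_eq_empty_iff.mpr fun x _ hx => hb (hx ▸ hmaps x))
    rw [uniformOfFinset_apply_of_notMem (hs := hs) hb, hempty, Nat.cast_zero, zero_mul]

theorem map_const_add_uniformOfFintype {G H : Type*} [AddGroup G] [Fintype G] [AddGroup H]
    [DecidableEq H] (f : G →+ H) (c : H) {s : Finset H} (hs : s.Nonempty)
    (hs_iff : ∀ y, y ∈ s ↔ -c + y ∈ Set.range f) :
    (uniformOfFintype G).map (fun x => c + f x) = uniformOfFinset s hs := by
  have hfiber (y : H) : #{x | c + f x = y} = #{x | f x = -c + y} := by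
    simp_rw [eq_neg_add_iff_add_eq]
  refine map_uniformOfFintype_eq_uniformOfFinset hs (fun x => (hs_iff _).mpr ?_)
    fun y hy y' hy' => ?_
  · exact ⟨x, by simp⟩
  · rw [hfiber, hfiber]
    exact AddMonoidHom.card_fiber_eq_of_mem_range f ((hs_iff y).mp hy) ((hs_iff y').mp hy')

end PMF

theorem Fintype.sum_sum_eq_zero_of_antisymm {ι G : Type*} [Fintype ι] [AddCommGroup G]
    {f : ι → ι → G} (hf : ∀ i j, f j i = -f i j) (hdiag : ∀ i, f i i = 0) :
    ∑ i, ∑ j, f i j = 0 := by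
  rw [← sum_product']
  refine sum_ninvolution Prod.swap
    (fun x => by rw [Prod.fst_swap, Prod.snd_swap, hf, neg_add_cancel])
    (fun x hx hswap => hx ?_) (fun _ => mem_univ _) Prod.swap_swap
  rw [← Prod.fst_swap (p := x), hswap]
  exact hdiag _

abbrev IncreasingPairs (U : Type*) [LT U] := {q : U × U // q.1 < q.2}

section Masks

variable {U G : Type*} [LinearOrder U] [AddCommGroup G]

def pairMask (p : IncreasingPairs U → G) (u v : U) : G :=
  if huv : u < v then p ⟨(u, v), huv⟩ else if hvu : v < u then -p ⟨(v, u), hvu⟩ else 0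

@[simp]
theorem pairMask_self (p : IncreasingPairs U → G) (u : U) : pairMask p u u = 0 := by
  simp [pairMask]

theorem pairMask_swap (p : IncreasingPairs U → G) (u v : U) :
    pairMask p v u = -pairMask p u v := by
  rcases lt_trichotomy u v with huv | rfl | hvu
  · simp [pairMask, huv, huv.not_gt]
  · simp
  · simp [pairMask, hvu, hvu.not_gt]

theorem pairMask_add (p q : IncreasingPairs U → G) (u v : U) :
    pairMask (p + q) u v = pairMask p u v + pairMask q u v := by
  unfold pairMask
  split_ifs <;> simp [add_comm]

theorem pairMask_restrict {f : U → U → G} (hf : ∀ u v, f v u = -f u v) (hdiag : ∀ u, f u u = 0)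
    (u v : U) : pairMask (fun q : IncreasingPairs U => f q.1.1 q.1.2) u v = f u v := by
  rcases lt_trichotomy u v with huv | rfl | hvu
  · simp [pairMask, huv]
  · simp [hdiag]
  · simp [pairMask, hvu, hvu.not_gt, hf v u]

variable [Fintype U]

def maskSum : (IncreasingPairs U → G) →+ (U → G) :=
  AddMonoidHom.mk' (fun p u => ∑ v ∈ univ.erase u, pairMask p u v) fun p q => by
    ext u
    simp [pairMask_add, sum_add_distrib]

theorem maskSum_apply (p : IncreasingPairs U → G) (u : U) :
    maskSum p u = ∑ v, pairMask p u v :=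
  sum_erase univ (pairMask_self p u)

theorem sum_maskSum (p : IncreasingPairs U → G) : ∑ u, maskSum p u = 0 := by
  simp only [maskSum_apply]
  exact Fintype.sum_sum_eq_zero_of_antisymm (pairMask_swap p) (pairMask_self p)

theorem mem_range_maskSum_iff (w : U → G) : w ∈ Set.range maskSum ↔ ∑ u, w u = 0 := by
  classical
  refine ⟨?_, fun hw => ?_⟩
  · rintro ⟨p, rfl⟩
    exact sum_maskSum p
  obtain hU | ⟨⟨r⟩⟩ := isEmpty_or_nonempty U
  · exact ⟨0, funext isEmptyElim⟩
  let f (u v : U) : G := (if v = r then w u else 0) - if u = r then w v else 0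
  refine ⟨fun q => f q.1.1 q.1.2, funext fun u => ?_⟩
  rw [maskSum_apply]
  simp_rw [pairMask_restrict (f := f) (fun u v => by simp [f]) (fun u => sub_self _), f,
    sum_sub_distrib]
  simp [hw]

end Masks

theorem masked_values_uniform_given_sum_general {U : Type*} [Fintype U] [LinearOrder U]
    (R m : ℕ) [NeZero R]
    (h : U → (Fin m → ZMod R)) :
    PMF.map
        (fun p : {q : U × U // q.1 < q.2} → (Fin m → ZMod R) =>
          fun u : U => h u + ∑ v ∈ Finset.univ.erase u,
            (if huv : u < v then p ⟨(u, v), huv⟩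
             else if hvu : v < u then - p ⟨(v, u), hvu⟩ else 0))
        (PMF.uniformOfFintype ({q : U × U // q.1 < q.2} → (Fin m → ZMod R)))
      = PMF.uniformOfFinset
          (Finset.univ.filter
            (fun w : U → (Fin m → ZMod R) => ∑ u : U, w u = ∑ u : U, h u))
          ⟨h, Finset.mem_filter.mpr ⟨Finset.mem_univ _, rfl⟩⟩ := by
  refine PMF.map_const_add_uniformOfFintype maskSum h _ fun w => ?_
  simp only [mem_range_maskSum_iff, mem_filter, mem_univ, true_and, Pi.add_apply, Pi.neg_apply,
    sum_add_distrib, sum_neg_distrib, neg_add_eq_zero, eq_comm]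

/-- vFedSec masking lemma: let `U` be a finite linearly ordered set of clients with
`|U| ≥ 2`, let `R ≥ 2`, and let `h u ∈ (ZMod R)^m` be the fixed private value of each
client `u`. For each pair `u < v` let `p ⟨(u, v), _⟩` be independent uniform random
elements of `(ZMod R)^m` (jointly, `p` is uniform on the finite product space), and
define the antisymmetric pairwise masks `n (u, v) = p ⟨(u, v), _⟩` if `u < v`,
`n (u, v) = - p ⟨(v, u), _⟩` if `v < u`. Then the random tuple of masked values
`(h u + ∑ v ≠ u, n (u, v))_{u ∈ U}` is uniformly distributed on the set of all tuples
`w : U → (ZMod R)^m` with `∑ u, w u = ∑ u, h u`. -/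
theorem masked_values_uniform_given_sum {U : Type*} [Fintype U] [LinearOrder U]
    (hU : 2 ≤ Fintype.card U) (R m : ℕ) [NeZero R] (hR : 2 ≤ R)
    (h : U → (Fin m → ZMod R)) :
    PMF.map
        (fun p : {q : U × U // q.1 < q.2} → (Fin m → ZMod R) =>
          fun u : U => h u + ∑ v ∈ Finset.univ.erase u,
            (if huv : u < v then p ⟨(u, v), huv⟩
             else if hvu : v < u then - p ⟨(v, u), hvu⟩ else 0))
        (PMF.uniformOfFintype ({q : U × U // q.1 < q.2} → (Fin m → ZMod R)))
      = PMF.uniformOfFinset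
          (Finset.univ.filter
            (fun w : U → (Fin m → ZMod R) => ∑ u : U, w u = ∑ u : U, h u))
          ⟨h, Finset.mem_filter.mpr ⟨Finset.mem_univ _, rfl⟩⟩ :=
  masked_values_uniform_given_sum_general R m h
end

section
/- Let R ≥ 2 and m be natural numbers, and let v₁, v₂ be fixed elements of (ZMod R)^m. Let M be a random variable uniformly distributed on (ZMod R)^m. Then the pair (v₁ + M, v₂ − M) is uniformly distributed on the set {(a, b) ∈ (ZMod R)^m × (ZMod R)^m : a + b = v₁ + v₂}. That is, masking two clients' values with a single shared antisymmetric pairwise mask makes the pair of masked values uniform among all pairs with the correct sum. -/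
/-!
The map `M ↦ (v₁ + M, v₂ - M)` is injective and its image is exactly the set of pairs summing
to `v₁ + v₂`; the push-forward of a uniform law along an injection is uniform on the image.
-/

open PMF

theorem PMF.map_uniformOfFintype_of_injective {α β : Type*} [Fintype α] [Nonempty α]
    [DecidableEq β] {f : α → β} (hf : Function.Injective f) :
    (uniformOfFintype α).map f =
      uniformOfFinset (Finset.univ.image f) (Finset.univ_nonempty.image f) := by
  ext b
  rw [map_apply, uniformOfFinset_apply]
  by_cases hb : b ∈ Finset.univ.image f
  · obtain ⟨a, -, rfl⟩ := Finset.mem_image.mp hb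
    rw [tsum_eq_single a, if_pos rfl, if_pos hb, uniformOfFintype_apply,
      Finset.card_image_of_injective _ hf, Finset.card_univ]
    exact fun a' ha' => if_neg fun h => ha' (hf h).symm
  · rw [if_neg hb]
    refine ENNReal.tsum_eq_zero.mpr fun a => if_neg ?_
    rintro rfl
    exact hb (Finset.mem_image_of_mem f (Finset.mem_univ a))

section Masking

variable {G : Type*} [AddCommGroup G]

theorem add_sub_mask_injective (v₁ v₂ : G) :
    Function.Injective fun M : G => (v₁ + M, v₂ - M) :=
  fun _ _ h => add_left_cancel (congrArg Prod.fst h)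

theorem image_add_sub_mask [Fintype G] [DecidableEq G] (v₁ v₂ : G) :
    Finset.univ.image (fun M : G => (v₁ + M, v₂ - M)) =
      Finset.univ.filter fun p : G × G => p.1 + p.2 = v₁ + v₂ := by
  ext ⟨a, b⟩
  simp only [Finset.mem_image, Finset.mem_filter, Finset.mem_univ, true_and, Prod.mk.injEq]
  constructor
  · rintro ⟨M, rfl, rfl⟩
    abel
  · intro hab
    exact ⟨a - v₁, add_sub_cancel v₁ a, by rw [← sub_eq_of_eq_add' hab.symm]; abel⟩

theorem map_add_sub_mask_uniformOfFintype [Fintype G] [DecidableEq G] (v₁ v₂ : G) :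
    (uniformOfFintype G).map (fun M => (v₁ + M, v₂ - M)) =
      uniformOfFinset (Finset.univ.filter fun p : G × G => p.1 + p.2 = v₁ + v₂)
        ⟨(v₁, v₂), Finset.mem_filter.mpr ⟨Finset.mem_univ _, rfl⟩⟩ := by
  rw [map_uniformOfFintype_of_injective (add_sub_mask_injective v₁ v₂)]
  congr 1
  exact image_add_sub_mask v₁ v₂

end Masking

theorem two_client_mask_uniform_general (R m : ℕ) [NeZero R]
    (v₁ v₂ : Fin m → ZMod R) :
    PMF.map (fun M : Fin m → ZMod R => (v₁ + M, v₂ - M))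
        (PMF.uniformOfFintype (Fin m → ZMod R))
      = PMF.uniformOfFinset
          (Finset.univ.filter
            (fun p : (Fin m → ZMod R) × (Fin m → ZMod R) => p.1 + p.2 = v₁ + v₂))
          ⟨(v₁, v₂), Finset.mem_filter.mpr ⟨Finset.mem_univ _, rfl⟩⟩ :=
  map_add_sub_mask_uniformOfFintype v₁ v₂

/-- Two-client masking base case: let `v₁ v₂ : (ZMod R)^m` be fixed values and let `M`
be uniformly distributed on `(ZMod R)^m`. Then the pair `(v₁ + M, v₂ - M)` is uniformly
distributed on the set of pairs `(a, b)` with `a + b = v₁ + v₂`. -/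
theorem two_client_mask_uniform (R m : ℕ) [NeZero R] (hR : 2 ≤ R)
    (v₁ v₂ : Fin m → ZMod R) :
    PMF.map (fun M : Fin m → ZMod R => (v₁ + M, v₂ - M))
        (PMF.uniformOfFintype (Fin m → ZMod R))
      = PMF.uniformOfFinset
          (Finset.univ.filter
            (fun p : (Fin m → ZMod R) × (Fin m → ZMod R) => p.1 + p.2 = v₁ + v₂))
          ⟨(v₁, v₂), Finset.mem_filter.mpr ⟨Finset.mem_univ _, rfl⟩⟩ :=
  two_client_mask_uniform_general R m v₁ v₂
end
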